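/- arXiv:2305.15430 — 2 statements merged into one kernel-verified Lean document; each statement's English description precedes it below -/
import Mathlib

section
/- For τ > 0, v ∈ ℝ, and α ≤ β, the unique minimizer of f(y) = (y - v)² + τ·g(y), where g(y) = (min(y-α,0))² + (min(β-y,0))², is y* = (v + τ·P(v)) / (1 + τ), where P(v) = min(max(v, α), β) is the projection of v onto [α, β]. -/
lemma conv_min_sq (s t : ℝ) :
    (min s 0) ^ 2 + 2 * (min s 0) * (t - s) ≤ (min t 0) ^ 2 := by
  rcases le_or_gt s 0 with hs | hs
  · rw [min_eq_left hs]
    rcases le_or_gt t 0 with ht | ht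
    · rw [min_eq_left ht]; nlinarith [sq_nonneg (t - s)]
    · rw [min_eq_right ht.le]; nlinarith
  · rw [min_eq_right hs.le]; nlinarith [sq_nonneg (min t 0)]

theorem stmt_5 (α β : ℝ) (hab : α ≤ β) (τ : ℝ) (hτ : 0 < τ) (v : ℝ)
    (g : ℝ → ℝ) (hg : ∀ y, g y = (min (y - α) 0) ^ 2 + (min (β - y) 0) ^ 2)
    (f : ℝ → ℝ) (hf : ∀ y, f y = (y - v) ^ 2 + τ * g y)
    (ystar : ℝ) (hystar : ystar = (v + τ * min (max v α) β) / (1 + τ)) :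
    (∀ y : ℝ, f ystar ≤ f y) ∧ (∀ y : ℝ, f y = f ystar → y = ystar) := by
  have h1τ : (0:ℝ) < 1 + τ := by linarith
  have hD : (ystar - v) + τ * min (ystar - α) 0 - τ * min (β - ystar) 0 = 0 := by
    rcases le_or_gt v α with h | h
    · have hp : min (max v α) β = α := by rw [max_eq_right h, min_eq_left hab]
      have hy : ystar * (1 + τ) = v + τ * α := by
        rw [hystar, hp, div_mul_cancel₀ _ (ne_of_gt h1τ)]
      have hyα : ystar ≤ α := by nlinarith
      have hyβ : ystar ≤ β := hyα.trans hab
      rw [min_eq_left (by linarith), min_eq_right (by linarith)]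
      nlinarith
    · rcases le_or_gt v β with h2 | h2
      · have hp : min (max v α) β = v := by rw [max_eq_left h.le, min_eq_left h2]
        have hy : ystar = v := by
          rw [hystar, hp]; field_simp
        rw [hy, min_eq_right (by linarith), min_eq_right (by linarith)]
        ring
      · have hp : min (max v α) β = β := by
          rw [max_eq_left (hab.trans h2.le), min_eq_right h2.le]
        have hy : ystar * (1 + τ) = v + τ * β := by
          rw [hystar, hp, div_mul_cancel₀ _ (ne_of_gt h1τ)]
        have hyβ : β ≤ ystar := by nlinarith
        have hyα : α ≤ ystar := hab.trans hyβ
        rw [min_eq_right (by linarith), min_eq_left (by linarith)]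
        nlinarith
  have key : ∀ y : ℝ, f ystar + (y - ystar) ^ 2 ≤ f y := by
    intro y
    have h1 := conv_min_sq (ystar - α) (y - α)
    have h2 := conv_min_sq (β - ystar) (β - y)
    have hD' : ((ystar - v) + τ * min (ystar - α) 0 - τ * min (β - ystar) 0)
        * (y - ystar) = 0 := by rw [hD, zero_mul]
    rw [hf, hf, hg, hg]
    nlinarith [mul_le_mul_of_nonneg_left h1 hτ.le,
      mul_le_mul_of_nonneg_left h2 hτ.le]
  refine ⟨fun y => le_trans (by nlinarith [sq_nonneg (y - ystar)]) (key y), fun y hy => ?_⟩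
  have := key y
  rw [hy] at this
  have : (y - ystar) ^ 2 ≤ 0 := by linarith
  have : (y - ystar) ^ 2 = 0 := le_antisymm this (sq_nonneg _)
  have := pow_eq_zero_iff (n := 2) (by norm_num) |>.mp this
  linarith
end

section
/- Let g(x) = (min(x-α,0))² + (min(β-x,0))² with derivative g', λ > 0, ρ > 0. Suppose matrices X, Y, Λ, V satisfy V = X + Λ/ρ and Yᵢⱼ = (Vᵢⱼ + τ·P(Vᵢⱼ))/(1+τ) entrywise with τ = 2λ/ρ and P(v) = min(max(v,α),β). Then Y satisfies the stationarity condition Λᵢⱼ + ρ(Xᵢⱼ - Yᵢⱼ) = λ g'(Yᵢⱼ) for all i,j... equivalently Y minimizes ‖Y - V‖_F² + τ Σᵢⱼ g(Yᵢⱼ). -/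
open Finset

lemma key_stat (α β : ℝ) (hab : α ≤ β) (τ : ℝ) (hτpos : 0 < τ) (v y : ℝ)
    (hy : y = (v + τ * min (max v α) β) / (1 + τ)) :
    2 * (v - y) = τ * (2 * min (y - α) 0 - 2 * min (β - y) 0) := by
  have h1τ : 0 < 1 + τ := by linarith
  rcases le_or_gt v α with h | h
  · rw [max_eq_right h, min_eq_left hab] at hy
    have hyeq : y * (1 + τ) = v + τ * α := by rw [hy]; field_simp
    have hyα : y ≤ α := by nlinarith
    rw [min_eq_left (by linarith : y - α ≤ 0),
      min_eq_right (by linarith : (0:ℝ) ≤ β - y)]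
    nlinarith
  · rcases le_or_gt v β with h2 | h2
    · rw [max_eq_left h.le, min_eq_left h2] at hy
      have hyv : y = v := by rw [hy]; field_simp
      rw [min_eq_right (by linarith : (0:ℝ) ≤ y - α),
        min_eq_right (by linarith : (0:ℝ) ≤ β - y), hyv]
      ring
    · rw [max_eq_left (le_trans hab h2.le), min_eq_right h2.le] at hy
      have hyeq : y * (1 + τ) = v + τ * β := by rw [hy]; field_simp
      have hyβ : β ≤ y := by nlinarith
      rw [min_eq_right (by linarith : (0:ℝ) ≤ y - α),
        min_eq_left (by linarith : β - y ≤ 0)]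
      nlinarith

lemma key_cvx (a b : ℝ) : min a 0 ^ 2 + 2 * min a 0 * (b - a) ≤ min b 0 ^ 2 := by
  rcases le_total a 0 with ha | ha <;> rcases le_total b 0 with hb | hb <;>
    simp [min_eq_left, min_eq_right, ha, hb] <;> nlinarith [sq_nonneg (b - a), sq_nonneg a, sq_nonneg b]

theorem stmt_16 (n : ℕ) (α β : ℝ) (hab : α ≤ β) (lam ρ : ℝ) (hlam : 0 < lam) (hρ : 0 < ρ)
    (τ : ℝ) (hτ : τ = 2 * lam / ρ)
    (g g' : ℝ → ℝ)
    (hg : ∀ x, g x = (min (x - α) 0) ^ 2 + (min (β - x) 0) ^ 2)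
    (hg' : ∀ x, g' x = 2 * min (x - α) 0 - 2 * min (β - x) 0)
    (X Λ V Y : Matrix (Fin n) (Fin n) ℝ)
    (hV : ∀ i j, V i j = X i j + Λ i j / ρ)
    (hY : ∀ i j, Y i j = (V i j + τ * min (max (V i j) α) β) / (1 + τ)) :
    (∀ i j, Λ i j + ρ * (X i j - Y i j) = lam * g' (Y i j)) ∧
      ∀ Z : Matrix (Fin n) (Fin n) ℝ,
        (∑ i : Fin n, ∑ j : Fin n, (Y i j - V i j) ^ 2) +
            τ * ∑ i : Fin n, ∑ j : Fin n, g (Y i j) ≤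
          (∑ i : Fin n, ∑ j : Fin n, (Z i j - V i j) ^ 2) +
            τ * ∑ i : Fin n, ∑ j : Fin n, g (Z i j) := by
  have hτpos : 0 < τ := by rw [hτ]; positivity
  have hstat : ∀ i j, 2 * (V i j - Y i j) = τ * g' (Y i j) := by
    intro i j
    rw [hg']
    exact key_stat α β hab τ hτpos (V i j) (Y i j) (hY i j)
  constructor
  · intro i j
    have h1 := hstat i j
    have h2 := hV i j
    have : Λ i j = ρ * (V i j - X i j) := by
      field_simp at h2; linarith
    rw [this, hτ] at *
    have h3 : 2 * lam / ρ * g' (Y i j) * ρ = 2 * lam * g' (Y i j) := by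
      field_simp
    nlinarith [h1]
  · intro Z
    have key : ∀ i j, (Y i j - V i j) ^ 2 + τ * g (Y i j) ≤
        (Z i j - V i j) ^ 2 + τ * g (Z i j) := by
      intro i j
      set v := V i j
      set y := Y i j
      set z := Z i j
      have h1 := key_cvx (y - α) (z - α)
      have h2 := key_cvx (β - y) (β - z)
      have hst := hstat i j
      rw [hg'] at hst
      have hkey : 2 * (v - y) * (z - y) =
          τ * (2 * min (y - α) 0 - 2 * min (β - y) 0) * (z - y) := by rw [hst]
      have h1' := mul_le_mul_of_nonneg_left h1 hτpos.le
      have h2' := mul_le_mul_of_nonneg_left h2 hτpos.le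
      rw [hg, hg]
      nlinarith [sq_nonneg (z - y)]
    calc (∑ i : Fin n, ∑ j : Fin n, (Y i j - V i j) ^ 2) +
            τ * ∑ i : Fin n, ∑ j : Fin n, g (Y i j)
        = ∑ i : Fin n, ∑ j : Fin n, ((Y i j - V i j) ^ 2 + τ * g (Y i j)) := by
          simp [Finset.sum_add_distrib, Finset.mul_sum]
      _ ≤ ∑ i : Fin n, ∑ j : Fin n, ((Z i j - V i j) ^ 2 + τ * g (Z i j)) :=
          Finset.sum_le_sum fun i _ => Finset.sum_le_sum fun j _ => key i j
      _ = (∑ i : Fin n, ∑ j : Fin n, (Z i j - V i j) ^ 2) +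
            τ * ∑ i : Fin n, ∑ j : Fin n, g (Z i j) := by
          simp [Finset.sum_add_distrib, Finset.mul_sum]
end
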